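/- arXiv:2511.12714 — 5 statements merged into one kernel-verified Lean document; each statement's English description precedes it below -/
import Mathlib

section
/- Let G = (V,E) be a directed weighted graph with k negative vertices (vertices having at least one negative outgoing edge). There exists a graph G' = (V',E') with V ⊆ V' and |V'| = |V| + k such that: (1) each negative vertex of G' has exactly one negative outgoing edge; (2) G' has exactly k negative vertices; (3) for all s,t ∈ V and every hop bound h, the minimum weight of an s–t path with at most h negative edges is the same in G and G'. The construction: for each negative vertex u with outgoing edges (u,v₁),…,(u,v_ℓ) where (u,v₁) has minimum weight, add a new vertex u', an edge (u,u') of weight w(u,v₁), and replace each (u,v_i) by (u',v_i) of weight w(u,v_i) − w(u,v₁) ≥ 0. -/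
/-- A directed graph with real edge weights, with vertex set a subset of an
ambient type `W`. -/
structure WDigraph (W : Type*) where
  verts : Set W
  Edge : W → W → Prop
  w : W → W → ℝ
  edge_mem : ∀ u v, Edge u v → u ∈ verts ∧ v ∈ verts

/-- A negative vertex: one with at least one negative-weight outgoing edge. -/
def NegVertex {W : Type*} (G : WDigraph W) (u : W) : Prop :=
  u ∈ G.verts ∧ ∃ v, G.Edge u v ∧ G.w u v < 0

/-- The weight of a walk (given as a list of vertices) under edge weights `w`. -/
noncomputable def pathWeight {W : Type*} (w : W → W → ℝ) : List W → ℝ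
  | [] => 0
  | [_] => 0
  | u :: v :: rest => w u v + pathWeight w (v :: rest)

/-- The number of negative edges along a walk. -/
noncomputable def negCount {W : Type*} (w : W → W → ℝ) (p : List W) : ℕ :=
  (p.zip p.tail).countP (fun e => decide (w e.1 e.2 < 0))

/-- `p` is a walk of `G` from `s` to `t`. -/
def WalkIn {W : Type*} (G : WDigraph W) (s t : W) (p : List W) : Prop :=
  List.Chain' G.Edge p ∧ (∀ x ∈ p, x ∈ G.verts) ∧
    p.head? = some s ∧ p.getLast? = some t

/-!
Split every negative vertex `u` off a fresh twin `u'`: the edge `u → u'` gets a weight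
`m u < 0` bounding all out-weights of `u` from below (any lower bound works, not only the
minimum), and each negative edge `u → v` is rerouted as `u' → v` with the nonnegative weight
`w(u,v) - m u`. Inserting `u'` after every negative edge `u → v` turns a walk of `G` into a walk
of the split graph with the same weight (`m u` cancels) and the same number of negative edges
(now `u → u'`). Conversely, every walk of the split graph between original vertices arises in
this way, since a twin `u'` is entered only from `u` and left only along a rerouted edge.
-/

namespace WDigraph

variable {W : Type*}

lemma pathWeight_cons_cons (w : W → W → ℝ) (a b : W) (l : List W) :
    pathWeight w (a :: b :: l) = w a b + pathWeight w (b :: l) := rfl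

lemma negCount_cons_cons (w : W → W → ℝ) (a b : W) (l : List W) :
    negCount w (a :: b :: l) = (if w a b < 0 then 1 else 0) + negCount w (b :: l) := by
  by_cases h : w a b < 0 <;> simp [negCount, h, Nat.add_comm]

variable (G : WDigraph W)

def negVerts : Set W := {u | NegVertex G u}

lemma walkIn_of_isChain {s t : W} {p : List W} (hp : p.IsChain G.Edge)
    (hs : p.head? = some s) (ht : p.getLast? = some t) (hsV : s ∈ G.verts) : WalkIn G s t p := by
  refine ⟨hp, fun x hx => ?_, hs, ht⟩
  induction p generalizing s with
  | nil => simp at hx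
  | cons a l ih =>
    obtain rfl : a = s := by simpa using hs
    rcases List.mem_cons.1 hx with rfl | hx
    · exact hsV
    obtain ⟨b, l, rfl⟩ := List.exists_cons_of_ne_nil (List.ne_nil_of_mem hx)
    rw [List.isChain_cons_cons] at hp
    exact ih hp.2 rfl (by simpa using ht) (G.edge_mem a b hp.1).2 hx

lemma exists_forall_edge_le_weight (hfin : G.verts.Finite) :
    ∃ m : W → ℝ, ∀ u v, G.Edge u v → m u ≤ G.w u v := by
  have hbdd (u : W) : BddBelow (G.w u '' {v | G.Edge u v}) :=
    ((hfin.subset fun v hv => (G.edge_mem u v hv).2).image _).bddBelow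
  choose m hm using hbdd
  exact ⟨m, fun u v huv => hm u ⟨v, huv, rfl⟩⟩

lemma lt_zero_of_negVertex {m : W → ℝ} (hm : ∀ u v, G.Edge u v → m u ≤ G.w u v) {u : W}
    (hu : NegVertex G u) : m u < 0 := by
  obtain ⟨-, v, huv, hneg⟩ := hu
  exact (hm u v huv).trans_lt hneg

variable (twin : W → W)

noncomputable def splitWalk : List W → List W
  | [] => []
  | [a] => [a]
  | a :: b :: l =>
    if G.w a b < 0 then a :: twin a :: splitWalk (b :: l) else a :: splitWalk (b :: l)

lemma splitWalk_cons (a : W) (l : List W) : ∃ r, G.splitWalk twin (a :: l) = a :: r := by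
  cases l with
  | nil => exact ⟨[], rfl⟩
  | cons b l => by_cases h : G.w a b < 0 <;> simp [splitWalk, h]

lemma head?_splitWalk (p : List W) : (G.splitWalk twin p).head? = p.head? := by
  cases p with
  | nil => rfl
  | cons a l => obtain ⟨r, hr⟩ := G.splitWalk_cons twin a l; simp [hr]

lemma getLast?_splitWalk : ∀ p : List W, (G.splitWalk twin p).getLast? = p.getLast?
  | [] => rfl
  | [_] => rfl
  | a :: b :: l => by
    obtain ⟨r, hr⟩ := G.splitWalk_cons twin b l
    have ih := getLast?_splitWalk (b :: l)
    rw [hr] at ih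
    by_cases h : G.w a b < 0 <;> simp [splitWalk, h, hr, List.getLast?_cons_cons, ih]

variable [Nonempty W] (m : W → ℝ)

open Classical in
noncomputable def split : WDigraph W where
  verts := G.verts ∪ twin '' G.negVerts
  Edge a b := (G.Edge a b ∧ 0 ≤ G.w a b) ∨ (NegVertex G a ∧ b = twin a) ∨
    ∃ u, NegVertex G u ∧ a = twin u ∧ G.Edge u b ∧ G.w u b < 0
  w a b :=
    if a ∈ G.verts then (if b ∈ G.verts then G.w a b else m a)
    else G.w (Function.invFunOn twin G.negVerts a) b - m (Function.invFunOn twin G.negVerts a)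
  edge_mem a b := by
    rintro (⟨h, -⟩ | ⟨ha, rfl⟩ | ⟨u, hu, rfl, huv, -⟩)
    · exact ⟨.inl (G.edge_mem a b h).1, .inl (G.edge_mem a b h).2⟩
    · exact ⟨.inl ha.1, .inr ⟨a, ha, rfl⟩⟩
    · exact ⟨.inr ⟨u, hu, rfl⟩, .inl (G.edge_mem u b huv).2⟩

variable {G twin m}

lemma split_w_of_mem {a b : W} (ha : a ∈ G.verts) (hb : b ∈ G.verts) :
    (G.split twin m).w a b = G.w a b := by
  simp [split, ha, hb]

lemma split_w_twin (hfresh : Set.MapsTo twin G.negVerts G.vertsᶜ) {u : W} (hu : NegVertex G u) :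
    (G.split twin m).w u (twin u) = m u := by
  have htwin : twin u ∉ G.verts := hfresh hu
  simp [split, hu.1, htwin]

lemma split_w_twin_left (hinj : Set.InjOn twin G.negVerts)
    (hfresh : Set.MapsTo twin G.negVerts G.vertsᶜ) {u : W} (hu : NegVertex G u) (b : W) :
    (G.split twin m).w (twin u) b = G.w u b - m u := by
  have htwin : twin u ∉ G.verts := hfresh hu
  simp [split, htwin, hinj.leftInvOn_invFunOn hu]

lemma split_edge_and_w_neg_iff (hinj : Set.InjOn twin G.negVerts)
    (hfresh : Set.MapsTo twin G.negVerts G.vertsᶜ) (hm : ∀ u v, G.Edge u v → m u ≤ G.w u v)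
    {a b : W} :
    (G.split twin m).Edge a b ∧ (G.split twin m).w a b < 0 ↔ NegVertex G a ∧ b = twin a := by
  constructor
  · rintro ⟨⟨hab, hnonneg⟩ | hsplit | ⟨u, hu, rfl, hub, -⟩, hneg⟩
    · obtain ⟨ha, hb⟩ := G.edge_mem a b hab
      rw [split_w_of_mem ha hb] at hneg
      exact absurd hneg hnonneg.not_gt
    · exact hsplit
    · rw [split_w_twin_left hinj hfresh hu] at hneg
      exact absurd hneg (sub_nonneg.2 (hm u b hub)).not_gt
  · rintro ⟨ha, rfl⟩
    refine ⟨.inr (.inl ⟨ha, rfl⟩), ?_⟩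
    rw [split_w_twin hfresh ha]
    exact G.lt_zero_of_negVertex hm ha

lemma negVertex_split_iff (hinj : Set.InjOn twin G.negVerts)
    (hfresh : Set.MapsTo twin G.negVerts G.vertsᶜ) (hm : ∀ u v, G.Edge u v → m u ≤ G.w u v)
    {a : W} : NegVertex (G.split twin m) a ↔ NegVertex G a := by
  simp only [NegVertex, split_edge_and_w_neg_iff hinj hfresh hm, exists_eq_right]
  exact ⟨And.right, fun ha => ⟨.inl ha.1, ha⟩⟩

lemma ncard_split_verts (hfin : G.verts.Finite) (hinj : Set.InjOn twin G.negVerts)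
    (hfresh : Set.MapsTo twin G.negVerts G.vertsᶜ) :
    (G.split twin m).verts.ncard = G.verts.ncard + G.negVerts.ncard := by
  have hdisj : Disjoint G.verts (twin '' G.negVerts) :=
    Set.disjoint_right.2 fun _ ⟨_, hu, hx⟩ => hx ▸ hfresh hu
  have hnfin : G.negVerts.Finite := hfin.subset fun _ hu => hu.1
  exact (Set.ncard_union_eq hdisj hfin (hnfin.image twin)).trans (by rw [hinj.ncard_image])

lemma isChain_splitWalk : ∀ {p : List W}, p.IsChain G.Edge →
    (G.splitWalk twin p).IsChain (G.split twin m).Edge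
  | [], _ => List.isChain_nil
  | [a], _ => List.isChain_singleton a
  | a :: b :: l, hp => by
    rw [List.isChain_cons_cons] at hp
    obtain ⟨r, hr⟩ := G.splitWalk_cons twin b l
    have ih : (b :: r).IsChain (G.split twin m).Edge := hr ▸ isChain_splitWalk hp.2
    by_cases hab : G.w a b < 0
    · have ha : NegVertex G a := ⟨(G.edge_mem a b hp.1).1, b, hp.1, hab⟩
      simp only [splitWalk, if_pos hab, hr, List.isChain_cons_cons]
      exact ⟨.inr (.inl ⟨ha, rfl⟩), .inr (.inr ⟨a, ha, rfl, hp.1, hab⟩), ih⟩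
    · simp only [splitWalk, if_neg hab, hr, List.isChain_cons_cons]
      exact ⟨.inl ⟨hp.1, not_lt.1 hab⟩, ih⟩

lemma pathWeight_splitWalk (hinj : Set.InjOn twin G.negVerts)
    (hfresh : Set.MapsTo twin G.negVerts G.vertsᶜ) : ∀ {p : List W}, p.IsChain G.Edge →
    pathWeight (G.split twin m).w (G.splitWalk twin p) = pathWeight G.w p
  | [], _ | [_], _ => rfl
  | a :: b :: l, hp => by
    rw [List.isChain_cons_cons] at hp
    obtain ⟨r, hr⟩ := G.splitWalk_cons twin b l
    have ih := pathWeight_splitWalk hinj hfresh hp.2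
    rw [hr] at ih
    obtain ⟨ha, hb⟩ := G.edge_mem a b hp.1
    by_cases hab : G.w a b < 0
    · have hu : NegVertex G a := ⟨ha, b, hp.1, hab⟩
      simp only [splitWalk, if_pos hab, hr, pathWeight_cons_cons, ih, split_w_twin hfresh hu,
        split_w_twin_left hinj hfresh hu]
      ring
    · simp only [splitWalk, if_neg hab, hr, pathWeight_cons_cons, ih, split_w_of_mem ha hb]

lemma negCount_splitWalk (hinj : Set.InjOn twin G.negVerts)
    (hfresh : Set.MapsTo twin G.negVerts G.vertsᶜ) (hm : ∀ u v, G.Edge u v → m u ≤ G.w u v) :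
    ∀ {p : List W}, p.IsChain G.Edge →
    negCount (G.split twin m).w (G.splitWalk twin p) = negCount G.w p
  | [], _ | [_], _ => rfl
  | a :: b :: l, hp => by
    rw [List.isChain_cons_cons] at hp
    obtain ⟨r, hr⟩ := G.splitWalk_cons twin b l
    have ih := negCount_splitWalk hinj hfresh hm hp.2
    rw [hr] at ih
    obtain ⟨ha, hb⟩ := G.edge_mem a b hp.1
    by_cases hab : G.w a b < 0
    · have hu : NegVertex G a := ⟨ha, b, hp.1, hab⟩
      simp only [splitWalk, if_pos hab, hr, negCount_cons_cons, ih, split_w_twin hfresh hu,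
        split_w_twin_left hinj hfresh hu, if_pos (G.lt_zero_of_negVertex hm hu),
        if_neg (sub_nonneg.2 (hm a b hp.1)).not_gt, zero_add]
    · simp only [splitWalk, if_neg hab, hr, negCount_cons_cons, ih, split_w_of_mem ha hb]

lemma exists_isChain_splitWalk_eq (hinj : Set.InjOn twin G.negVerts)
    (hfresh : Set.MapsTo twin G.negVerts G.vertsᶜ) :
    ∀ {a : W} {q : List W}, (a :: q).IsChain (G.split twin m).Edge → a ∈ G.verts →
      (∀ t ∈ (a :: q).getLast?, t ∈ G.verts) →
      ∃ p, (a :: p).IsChain G.Edge ∧ G.splitWalk twin (a :: p) = a :: q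
  | a, [], _, _, _ => ⟨[], List.isChain_singleton a, rfl⟩
  | a, b :: l, hq, ha, hlast => by
    rw [List.isChain_cons_cons] at hq
    obtain ⟨⟨hab, hnonneg⟩ | ⟨hneg, rfl⟩ | ⟨u, hu, rfl, -, -⟩, hq⟩ := hq
    · obtain ⟨p, hp, hpq⟩ := exists_isChain_splitWalk_eq hinj hfresh hq
        (G.edge_mem a b hab).2 (by simpa using hlast)
      refine ⟨b :: p, List.isChain_cons_cons.2 ⟨hab, hp⟩, ?_⟩
      simp [splitWalk, hnonneg.not_gt, hpq]
    · cases l with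
      | nil => exact absurd (hlast _ rfl) (hfresh hneg)
      | cons c l =>
        obtain ⟨htc, hq⟩ := List.isChain_cons_cons.1 hq
        have hac : G.Edge a c ∧ G.w a c < 0 := by
          obtain ⟨h, -⟩ | ⟨h, -⟩ | ⟨u, hu, hua, huc, hneg'⟩ := htc
          · exact absurd (G.edge_mem _ _ h).1 (hfresh hneg)
          · exact absurd h.1 (hfresh hneg)
          · obtain rfl := hinj hneg hu hua
            exact ⟨huc, hneg'⟩
        obtain ⟨p, hp, hpq⟩ := exists_isChain_splitWalk_eq hinj hfresh hq
          (G.edge_mem a c hac.1).2 (by simpa using hlast)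
        refine ⟨c :: p, List.isChain_cons_cons.2 ⟨hac.1, hp⟩, ?_⟩
        simp [splitWalk, hac.2, hpq]
    · exact absurd ha (hfresh hu)

lemma walkIn_split_splitWalk {s t : W} {p : List W} (hp : WalkIn G s t p) :
    WalkIn (G.split twin m) s t (G.splitWalk twin p) :=
  (G.split twin m).walkIn_of_isChain (isChain_splitWalk hp.1)
    ((G.head?_splitWalk twin p).trans hp.2.2.1) ((G.getLast?_splitWalk twin p).trans hp.2.2.2)
    (.inl (hp.2.1 s (List.mem_of_mem_head? hp.2.2.1)))

lemma exists_walkIn_splitWalk_eq (hinj : Set.InjOn twin G.negVerts)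
    (hfresh : Set.MapsTo twin G.negVerts G.vertsᶜ) {s t : W} {q : List W}
    (hq : WalkIn (G.split twin m) s t q) (hs : s ∈ G.verts) (ht : t ∈ G.verts) :
    ∃ p, WalkIn G s t p ∧ G.splitWalk twin p = q := by
  obtain ⟨hchain, -, hhead, hlast⟩ := hq
  obtain ⟨q, rfl⟩ := List.head?_eq_some_iff.1 hhead
  obtain ⟨p, hp, hpq⟩ := exists_isChain_splitWalk_eq hinj hfresh hchain hs (by simpa [hlast])
  refine ⟨s :: p, G.walkIn_of_isChain hp rfl ?_ hs, hpq⟩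
  rw [← getLast?_splitWalk, hpq, hlast]

end WDigraph

/-- Lemma 1.5: any graph with `k` negative vertices can be transformed into a
graph with `k` extra vertices, still `k` negative vertices each with exactly
one negative outgoing edge, preserving all `h`-negative-hop distances. -/
theorem one_negative_outgoing_edge {W : Type*} [Infinite W]
    (G : WDigraph W) (hfin : G.verts.Finite) (k : ℕ)
    (hk : {u | NegVertex G u}.ncard = k) :
    ∃ G' : WDigraph W,
      G.verts ⊆ G'.verts ∧ G'.verts.Finite ∧
      G'.verts.ncard = G.verts.ncard + k ∧
      (∀ u, NegVertex G' u → ∃! v, G'.Edge u v ∧ G'.w u v < 0) ∧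
      {u | NegVertex G' u}.ncard = k ∧
      (∀ s ∈ G.verts, ∀ t ∈ G.verts, ∀ h : ℕ,
        (∀ p, WalkIn G s t p → negCount G.w p ≤ h →
          ∃ q, WalkIn G' s t q ∧ negCount G'.w q ≤ h ∧
            pathWeight G'.w q ≤ pathWeight G.w p) ∧
        (∀ q, WalkIn G' s t q → negCount G'.w q ≤ h →
          ∃ p, WalkIn G s t p ∧ negCount G.w p ≤ h ∧
            pathWeight G.w p ≤ pathWeight G'.w q)) := by
  have hnegfin : G.negVerts.Finite := hfin.subset fun _ hu => hu.1
  obtain ⟨twin, hfresh, hinj⟩ := hnegfin.exists_injOn_of_encard_le (t := G.vertsᶜ)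
    (by rw [hfin.infinite_compl.encard_eq]; exact le_top)
  obtain ⟨m, hm⟩ := G.exists_forall_edge_le_weight hfin
  have hnegV : {u | NegVertex (G.split twin m) u} = G.negVerts :=
    Set.ext fun _ => WDigraph.negVertex_split_iff hinj hfresh hm
  refine ⟨G.split twin m, Set.subset_union_left, hfin.union (hnegfin.image twin),
    by rw [WDigraph.ncard_split_verts hfin hinj hfresh, ← hk]; rfl, fun u hu => ?_, hnegV ▸ hk,
    fun s hs t ht h => ⟨fun p hp hph => ?_, fun q hq hqh => ?_⟩⟩
  · have hu := (WDigraph.negVertex_split_iff hinj hfresh hm).1 hu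
    exact ⟨twin u, (WDigraph.split_edge_and_w_neg_iff hinj hfresh hm).2 ⟨hu, rfl⟩,
      fun v hv => ((WDigraph.split_edge_and_w_neg_iff hinj hfresh hm).1 hv).2⟩
  · exact ⟨_, WDigraph.walkIn_split_splitWalk hp,
      (WDigraph.negCount_splitWalk hinj hfresh hm hp.1).trans_le hph,
      (WDigraph.pathWeight_splitWalk hinj hfresh hp.1).le⟩
  · obtain ⟨p, hp, rfl⟩ := WDigraph.exists_walkIn_splitWalk_eq hinj hfresh hq hs ht
    exact ⟨p, hp, (WDigraph.negCount_splitWalk hinj hfresh hm hp.1).symm.trans_le hqh,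
      (WDigraph.pathWeight_splitWalk hinj hfresh hp.1).ge⟩
end

section
/- Let P be a path with h negative edges, h ≥ 3, and suppose the negative edges are partitioned (in order) into ⌊h/3⌋ disjoint groups of three consecutive negative edges. If each group of three consecutive negative edges can be replaced by a subpath segment containing at most two negative edges without increasing weight, then P can be replaced by an s–t path of weight at most w(P) containing at most h − ⌊h/3⌋ negative edges. -/
/-- A walk represented as a list of (directed) edges: every edge is an edge of
the graph, and consecutive edges share an endpoint. -/
def WalkOK {V : Type*} (E : V → V → Prop) (l : List (V × V)) : Prop :=
  (∀ e ∈ l, E e.1 e.2) ∧ List.Chain' (fun e f => e.2 = f.1) l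

/-- Total weight of an edge-list walk. -/
noncomputable def wgt {V : Type*} (w : V → V → ℝ) (l : List (V × V)) : ℝ :=
  (l.map fun e => w e.1 e.2).sum

/-- Number of negative edges of an edge-list walk. -/
noncomputable def negc {V : Type*} (w : V → V → ℝ) (l : List (V × V)) : ℕ :=
  l.countP (fun e => decide (w e.1 e.2 < 0))

/-- Source of an edge-list walk. -/
def src {V : Type*} (l : List (V × V)) : Option V := l.head?.map Prod.fst

/-- Destination of an edge-list walk. -/
def dst {V : Type*} (l : List (V × V)) : Option V := l.getLast?.map Prod.snd

/-!
Each group is shortcut independently: replacing a segment of a walk by a walk with the same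
endpoints keeps a walk with the same endpoints, and weights and negative-edge counts are additive
along concatenation. Every group trades three negative edges for at most two, so the `⌊h/3⌋`
replacements save at least `⌊h/3⌋` negative edges in total.
-/

section Walks

variable {V : Type*}

lemma negc_append (w : V → V → ℝ) (a b : List (V × V)) :
    negc w (a ++ b) = negc w a + negc w b := by
  simp [negc, List.countP_append]

lemma wgt_append (w : V → V → ℝ) (a b : List (V × V)) :
    wgt w (a ++ b) = wgt w a + wgt w b := by
  simp [wgt]

lemma src_append (a b : List (V × V)) : src (a ++ b) = (src a).or (src b) := by
  cases a <;> simp [src]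

lemma dst_append (a b : List (V × V)) : dst (a ++ b) = (dst b).or (dst a) := by
  rcases b.eq_nil_or_concat with rfl | ⟨b', x, rfl⟩
  · simp [dst]
  · rw [List.concat_eq_append, ← List.append_assoc]
    simp [dst]

lemma walkOK_iff {E : V → V → Prop} {l : List (V × V)} :
    WalkOK E l ↔ (∀ e ∈ l, E e.1 e.2) ∧ l.IsChain (fun e f => e.2 = f.1) :=
  Iff.rfl

lemma walkOK_append_iff {E : V → V → Prop} {a b : List (V × V)} :
    WalkOK E (a ++ b) ↔ WalkOK E a ∧ WalkOK E b ∧ ∀ x ∈ dst a, ∀ y ∈ src b, x = y := by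
  simp only [walkOK_iff, List.isChain_append, List.mem_append, dst, src,
    Option.mem_map]
  constructor
  · rintro ⟨hE, ha, hb, hab⟩
    exact ⟨⟨fun e he => hE e (.inl he), ha⟩, ⟨fun e he => hE e (.inr he), hb⟩,
      by rintro _ ⟨e, he, rfl⟩ _ ⟨f, hf, rfl⟩; exact hab e he f hf⟩
  · rintro ⟨⟨hEa, ha⟩, ⟨hEb, hb⟩, hab⟩
    exact ⟨fun e he => he.elim (hEa e) (hEb e), ha, hb,
      fun e he f hf => hab _ ⟨e, he, rfl⟩ _ ⟨f, hf, rfl⟩⟩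

structure IsShortcut (E : V → V → Prop) (w : V → V → ℝ) (p q : List (V × V)) (k : ℕ) :
    Prop where
  walkOK : WalkOK E q
  src_eq : src q = src p
  dst_eq : dst q = dst p
  wgt_le : wgt w q ≤ wgt w p
  negc_add_le : negc w q + k ≤ negc w p

namespace IsShortcut

variable {E : V → V → Prop} {w : V → V → ℝ} {p q r : List (V × V)} {k l : ℕ}

lemma trans (hpq : IsShortcut E w p q k) (hqr : IsShortcut E w q r l) :
    IsShortcut E w p r (k + l) where
  walkOK := hqr.walkOK
  src_eq := hqr.src_eq.trans hpq.src_eq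
  dst_eq := hqr.dst_eq.trans hpq.dst_eq
  wgt_le := hqr.wgt_le.trans hpq.wgt_le
  negc_add_le := by have := hpq.negc_add_le; have := hqr.negc_add_le; omega

lemma append_left (hpq : IsShortcut E w p q k) {a : List (V × V)} (ha : WalkOK E (a ++ p)) :
    IsShortcut E w (a ++ p) (a ++ q) k where
  walkOK := by
    obtain ⟨ha, -, hap⟩ := walkOK_append_iff.mp ha
    exact walkOK_append_iff.mpr ⟨ha, hpq.walkOK, hpq.src_eq ▸ hap⟩
  src_eq := by rw [src_append, src_append, hpq.src_eq]
  dst_eq := by rw [dst_append, dst_append, hpq.dst_eq]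
  wgt_le := by rw [wgt_append, wgt_append]; linarith [hpq.wgt_le]
  negc_add_le := by rw [negc_append, negc_append]; linarith [hpq.negc_add_le]

lemma append_right (hpq : IsShortcut E w p q k) {b : List (V × V)} (hb : WalkOK E (p ++ b)) :
    IsShortcut E w (p ++ b) (q ++ b) k where
  walkOK := by
    obtain ⟨-, hb, hpb⟩ := walkOK_append_iff.mp hb
    exact walkOK_append_iff.mpr ⟨hpq.walkOK, hb, hpq.dst_eq ▸ hpb⟩
  src_eq := by rw [src_append, src_append, hpq.src_eq]
  dst_eq := by rw [dst_append, dst_append, hpq.dst_eq]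
  wgt_le := by rw [wgt_append, wgt_append]; linarith [hpq.wgt_le]
  negc_add_le := by rw [negc_append, negc_append]; linarith [hpq.negc_add_le]

end IsShortcut

lemma exists_isShortcut_flatten {E : V → V → Prop} {w : V → V → ℝ} :
    ∀ (groups : List (List (V × V) × List (V × V))),
      WalkOK E (groups.map fun g => g.1 ++ g.2).flatten →
      (∀ g ∈ groups, ∃ r, IsShortcut E w g.1 r 1) →
      ∃ q, IsShortcut E w (groups.map fun g => g.1 ++ g.2).flatten q groups.length
  | [], _, _ => ⟨[], ⟨walkOK_iff.mpr ⟨by simp, List.isChain_nil⟩, rfl, rfl, le_rfl, le_rfl⟩⟩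
  | g :: gs, hwalk, hrepl => by
    set rest := (gs.map fun g => g.1 ++ g.2).flatten
    have hsplit : ((g :: gs).map fun g => g.1 ++ g.2).flatten = g.1 ++ (g.2 ++ rest) := by
      simp [rest]
    rw [hsplit] at hwalk ⊢
    obtain ⟨r, hr⟩ := hrepl g List.mem_cons_self
    have hfirst := hr.append_right hwalk
    obtain ⟨q, hq⟩ := exists_isShortcut_flatten gs
      (walkOK_append_iff.mp (walkOK_append_iff.mp hwalk).2.1).2.1
      fun g hg => hrepl g (List.mem_cons_of_mem _ hg)
    have hrest := hq.append_left (a := r ++ g.2) (by simpa using hfirst.walkOK)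
    refine ⟨r ++ g.2 ++ q, ?_⟩
    simpa [Nat.add_comm] using hfirst.trans (by simpa using hrest)

end Walks

theorem shortcut_groups_general {V : Type*} (E : V → V → Prop) (w : V → V → ℝ)
    (h : ℕ)
    (p : List (V × V)) (hp : WalkOK E p) (hneg : negc w p = h)
    (l₀ : List (V × V)) (groups : List (List (V × V) × List (V × V)))
    (hdecomp : p = l₀ ++ (groups.map fun g => g.1 ++ g.2).flatten)
    (hlen : groups.length = h / 3)
    (hthree : ∀ g ∈ groups, negc w g.1 = 3)
    (hrepl : ∀ g ∈ groups, ∃ r : List (V × V), WalkOK E r ∧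
      src r = src g.1 ∧ dst r = dst g.1 ∧ wgt w r ≤ wgt w g.1 ∧ negc w r ≤ 2) :
    ∃ p' : List (V × V), WalkOK E p' ∧ src p' = src p ∧ dst p' = dst p ∧
      wgt w p' ≤ wgt w p ∧ negc w p' ≤ h - h / 3 := by
  have hshort : ∀ g ∈ groups, ∃ r, IsShortcut E w g.1 r 1 := by
    intro g hg
    obtain ⟨r, hr, hsrc, hdst, hwgt, hnegc⟩ := hrepl g hg
    exact ⟨r, hr, hsrc, hdst, hwgt, by rw [hthree g hg]; omega⟩
  subst hdecomp
  obtain ⟨q, hq⟩ := exists_isShortcut_flatten groups (walkOK_append_iff.mp hp).2.1 hshort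
  obtain ⟨hwalk, hsrc, hdst, hwgt, hnegc⟩ := hq.append_left hp
  exact ⟨l₀ ++ q, hwalk, hsrc, hdst, hwgt, by omega⟩

/-- If a path `P` with `h ≥ 3` negative edges decomposes into an initial
segment followed by `⌊h/3⌋` groups (each a segment with exactly three of `P`'s
negative edges, followed by a further segment), and each group's three-negative
segment can be replaced by a segment with the same endpoints, no larger weight,
and at most two negative edges, then `P` can be replaced by a path with the
same endpoints, weight at most `w(P)`, and at most `h − ⌊h/3⌋` negative
edges. -/
theorem shortcut_groups {V : Type*} (E : V → V → Prop) (w : V → V → ℝ)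
    (h : ℕ) (hh : 3 ≤ h)
    (p : List (V × V)) (hp : WalkOK E p) (hneg : negc w p = h)
    (l₀ : List (V × V)) (groups : List (List (V × V) × List (V × V)))
    (hdecomp : p = l₀ ++ (groups.map fun g => g.1 ++ g.2).flatten)
    (hlen : groups.length = h / 3)
    (hthree : ∀ g ∈ groups, negc w g.1 = 3)
    (hrepl : ∀ g ∈ groups, ∃ r : List (V × V), WalkOK E r ∧
      src r = src g.1 ∧ dst r = dst g.1 ∧ wgt w r ≤ wgt w g.1 ∧ negc w r ≤ 2) :
    ∃ p' : List (V × V), WalkOK E p' ∧ src p' = src p ∧ dst p' = dst p ∧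
      wgt w p' ≤ wgt w p ∧ negc w p' ≤ h - h / 3 :=
  shortcut_groups_general E w h p hp hneg l₀ groups hdecomp hlen hthree hrepl
end

section
/- Consider a graph H consisting of 2h+1 copies G₀, G₁^f, …, G_h^f, G₁^b, …, G_h^b of the nonnegative part of G, where each original negative edge (u,v) of weight w induces edges of weight w + M ≥ 0 going from layer G₀/G_i^f to the next forward layer, and from layer G_{i+1}^b to G_i^b and G₁^b to G₀, plus for certain vertices x an edge from x_h^f to x_h^b of weight −2hM. Then every cycle in H corresponds to a closed walk in G of the same total weight; hence a negative cycle in H implies a negative cycle in G. -/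
open scoped Classical

/-- Edges of the layered graph `H` built from `G = (E, w)` with hop bound `h`
and sampled set `S`.  A vertex `(v, i)` is the copy of `v` in layer `i`, where
layer `0` is `G₀`, layers `1,…,h` are `G₁^f,…,G_h^f`, and layers
`h+1,…,2h` are `G_h^b,…,G_1^b`.  Nonnegative edges stay inside a layer;
each negative edge of `G` induces edges to the next layer (cyclically,
with `G_1^b → G₀` realized as layer `2h → 0`); and each sampled `x ∈ S` has a
shortcut edge from `x_h^f` (layer `h`) to `x_h^b` (layer `h+1`). -/
def EH {V : Type*} (E : V → V → Prop) (w : V → V → ℝ) (h : ℕ) (S : Set V) :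
    V × ℕ → V × ℕ → Prop := fun a b =>
  (a.2 = b.2 ∧ a.2 ≤ 2 * h ∧ E a.1 b.1 ∧ 0 ≤ w a.1 b.1) ∨
  (E a.1 b.1 ∧ w a.1 b.1 < 0 ∧ a.2 + 1 = b.2 ∧ b.2 ≤ 2 * h ∧ a.2 ≠ h) ∨
  (E a.1 b.1 ∧ w a.1 b.1 < 0 ∧ a.2 = 2 * h ∧ b.2 = 0) ∨
  (a.1 = b.1 ∧ a.1 ∈ S ∧ a.2 = h ∧ b.2 = h + 1)

/-- Weights of the layered graph `H`: intra-layer edges keep their weight,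
inter-layer copies of negative edges get weight `w + M ≥ 0`, and the shortcut
edges `x_h^f → x_h^b` have weight `−2hM`. -/
noncomputable def wH {V : Type*} (w : V → V → ℝ) (h : ℕ) (M : ℝ) :
    V × ℕ → V × ℕ → ℝ := fun a b =>
  if a.2 = b.2 then w a.1 b.1
  else if a.1 = b.1 ∧ a.2 = h ∧ b.2 = h + 1 then -(2 * (h : ℝ)) * M
  else w a.1 b.1 + M

/-! Project a cycle of `H` to `G` by forgetting layers and contracting the shortcut steps
`x_h^f → x_h^b`, which project to the trivial step `x → x`. Give layer `G_j^f` the potential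
`j M` and `G_j^b` the potential `-j M`. Then every edge of `H` weighs its projection (zero for a
shortcut) plus the potential difference of its endpoints, and around a closed walk these
differences telescope to zero. -/

section Collapse

variable {α β : Type*} (f : α → β) (s : α → α → Prop)

noncomputable def collapseAfter (a : α) : List α → List β
  | [] => []
  | b :: l => if s a b then collapseAfter b l else f b :: collapseAfter b l

noncomputable def collapse : List α → List β
  | [] => []
  | a :: l => f a :: collapseAfter f s a l

variable {f s}

theorem isChain_of_collapseAfter_eq_nil {a : α} {l : List α}
    (hl : collapseAfter f s a l = []) : List.IsChain s (a :: l) := by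
  induction l generalizing a with
  | nil => exact List.isChain_singleton a
  | cons b l ih =>
    by_cases hs : s a b
    · simp only [collapseAfter, if_pos hs] at hl
      exact List.isChain_cons_cons.2 ⟨hs, ih hl⟩
    · simp [collapseAfter, if_neg hs] at hl

theorem two_le_length_collapse {c : List α} (hc : c ≠ []) (hs : ¬ List.IsChain s c) :
    2 ≤ (collapse f s c).length := by
  obtain ⟨a, l, rfl⟩ := List.exists_cons_of_ne_nil hc
  have : collapseAfter f s a l ≠ [] := fun h => hs (isChain_of_collapseAfter_eq_nil h)
  simpa [collapse, Nat.one_le_iff_ne_zero] using this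

variable (hs : ∀ a b, s a b → f a = f b)
include hs

theorem getLast?_collapse (c : List α) : (collapse f s c).getLast? = c.getLast?.map f := by
  cases c with
  | nil => rfl
  | cons a l =>
    induction l generalizing a with
    | nil => rfl
    | cons b l ih =>
      by_cases hab : s a b
      · simp only [collapse, collapseAfter, if_pos hab, List.getLast?_cons_cons] at ih ⊢
        rw [List.getLast?_cons, hs a b hab, ← List.getLast?_cons, ih]
      · simp only [collapse, collapseAfter, if_neg hab, List.getLast?_cons_cons] at ih ⊢
        exact ih b

theorem isChain_collapse {R : α → α → Prop} {E : β → β → Prop}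
    (hE : ∀ a b, R a b → ¬ s a b → E (f a) (f b)) {c : List α} (hc : List.IsChain R c) :
    List.IsChain E (collapse f s c) := by
  cases c with
  | nil => exact List.IsChain.nil
  | cons a l =>
    induction l generalizing a with
    | nil => exact List.isChain_singleton _
    | cons b l ih =>
      obtain ⟨hab, hc⟩ := List.isChain_cons_cons.1 hc
      by_cases hsab : s a b
      · simpa only [collapse, collapseAfter, if_pos hsab, hs a b hsab] using ih b hc
      · simp only [collapse, collapseAfter, if_neg hsab] at ih ⊢
        exact List.isChain_cons_cons.2 ⟨hE a b hab hsab, ih b hc⟩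

theorem pathWeight_collapse (w : β → β → ℝ) (c : List α) :
    pathWeight w (collapse f s c) =
      pathWeight (fun a b => if s a b then 0 else w (f a) (f b)) c := by
  cases c with
  | nil => rfl
  | cons a l =>
    induction l generalizing a with
    | nil => rfl
    | cons b l ih =>
      by_cases hab : s a b
      · simp only [collapse, collapseAfter, if_pos hab, hs a b hab] at ih ⊢
        simp [pathWeight, hab, ih b]
      · simp only [collapse, collapseAfter, if_neg hab] at ih ⊢
        simp [pathWeight, hab, ih b]

end Collapse

section Potential

variable {W : Type*} {R : W → W → Prop} {w₁ w₂ : W → W → ℝ} {φ : W → ℝ}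

theorem pathWeight_add_eq_of_potential (hφ : ∀ a b, R a b → w₂ a b = w₁ a b + φ b - φ a)
    {a : W} {l : List W} (hc : List.IsChain R (a :: l)) :
    pathWeight w₂ (a :: l) + φ a = pathWeight w₁ (a :: l) + φ ((a :: l).getLast (by simp)) := by
  induction l generalizing a with
  | nil => simp [pathWeight]
  | cons b l ih =>
    obtain ⟨hab, hc⟩ := List.isChain_cons_cons.1 hc
    have := ih hc
    simp only [pathWeight, List.getLast_cons_cons] at this ⊢
    linarith [hφ a b hab]

theorem pathWeight_eq_of_potential (hφ : ∀ a b, R a b → w₂ a b = w₁ a b + φ b - φ a)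
    {c : List W} (hc : List.IsChain R c) (hclosed : c.head? = c.getLast?) :
    pathWeight w₂ c = pathWeight w₁ c := by
  cases c with
  | nil => rfl
  | cons a l =>
    have hlast : (a :: l).getLast (by simp) = a := by
      simpa [List.getLast?_eq_some_getLast] using hclosed.symm
    have := pathWeight_add_eq_of_potential hφ hc
    rw [hlast] at this
    linarith

end Potential

section Layered

variable {V : Type*}

def IsShortcut_s14 (h : ℕ) (a b : V × ℕ) : Prop := a.1 = b.1 ∧ a.2 = h ∧ b.2 = h + 1

-- Layer `G_j^f` (index `j`) gets potential `j M` and `G_j^b` (index `2h + 1 - j`) gets `-j M`.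
noncomputable def layerPotential (h : ℕ) (M : ℝ) (i : ℕ) : ℝ :=
  if i ≤ h then i * M else ((i : ℝ) - 2 * h - 1) * M

theorem wH_eq_add_layerPotential {E : V → V → Prop} {w : V → V → ℝ} {h : ℕ} {S : Set V}
    (M : ℝ) {a b : V × ℕ} (hab : EH E w h S a b) :
    wH w h M a b = (if IsShortcut_s14 h a b then 0 else w a.1 b.1) +
      layerPotential h M b.2 - layerPotential h M a.2 := by
  by_cases hs : IsShortcut_s14 h a b
  · obtain ⟨-, ha, hb⟩ := id hs
    have hwH : wH w h M a b = -(2 * h) * M := by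
      simp only [wH, if_neg (by omega : a.2 ≠ b.2)]; exact if_pos hs
    rw [hwH, if_pos hs, ha, hb, layerPotential, layerPotential, if_pos le_rfl,
      if_neg (by omega)]
    push_cast
    ring
  · rw [if_neg hs]
    have hwH : a.2 ≠ b.2 → wH w h M a b = w a.1 b.1 + M := fun hne => by
      simp only [wH, if_neg hne]; exact if_neg hs
    rcases hab with ⟨hab, -⟩ | ⟨-, -, hab, hb, ha⟩ | ⟨-, -, ha, hb⟩ | ⟨h1, -, h2, h3⟩
    · simp [wH, hab]
    · rw [hwH (by omega), ← hab]
      simp only [layerPotential]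
      split_ifs <;> first | omega | (push_cast; ring)
    · rcases Nat.eq_zero_or_pos h with rfl | hpos
      · simp [wH, ha, hb]
      · rw [hwH (by omega), ha, hb]
        simp only [layerPotential]
        split_ifs <;> first | omega | (push_cast; ring)
    · exact absurd ⟨h1, h2, h3⟩ hs

theorem EH.adj_of_not_isShortcut {E : V → V → Prop} {w : V → V → ℝ} {h : ℕ} {S : Set V}
    {a b : V × ℕ} (hab : EH E w h S a b) (hs : ¬ IsShortcut_s14 h a b) : E a.1 b.1 := by
  rcases hab with h1 | h2 | h3 | h4
  exacts [h1.2.2.1, h2.1, h3.1, absurd ⟨h4.1, h4.2.2⟩ hs]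

theorem not_isChain_isShortcut {h : ℕ} {c : List (V × ℕ)} (hlen : 2 ≤ c.length)
    (hclosed : c.head? = c.getLast?) : ¬ List.IsChain (IsShortcut_s14 h) c := by
  match c, hlen with
  | a :: b :: l, _ =>
    intro hc
    obtain ⟨⟨-, ha, hb⟩, hc⟩ := List.isChain_cons_cons.1 hc
    cases l with
    | nil =>
      have hab : a = b := by simpa using hclosed
      subst hab
      omega
    | cons d l =>
      have hb' : b.2 = h := (List.isChain_cons_cons.1 hc).1.2.1
      omega

end Layered

theorem layered_cycle_correspondence_general {V : Type*}
    (E : V → V → Prop) (w : V → V → ℝ) (h : ℕ)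
    (M : ℝ) (S : Set V) :
    ∀ c : List (V × ℕ), 2 ≤ c.length → List.Chain' (EH E w h S) c →
      c.head? = c.getLast? →
      ∃ g : List V, 2 ≤ g.length ∧ List.Chain' E g ∧ g.head? = g.getLast? ∧
        pathWeight w g = pathWeight (wH w h M) c := by
  intro c hlen hc hclosed
  obtain ⟨a, l, rfl⟩ := List.exists_cons_of_ne_nil 
    (List.ne_nil_of_length_pos (by omega : 0 < c.length))
  have hfst : ∀ a b : V × ℕ, IsShortcut_s14 h a b → a.1 = b.1 := fun _ _ hab => hab.1
  refine ⟨collapse Prod.fst (IsShortcut_s14 h) (a :: l), ?_, ?_, ?_, ?_⟩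
  · exact two_le_length_collapse (List.cons_ne_nil a l) (not_isChain_isShortcut hlen hclosed)
  · exact isChain_collapse hfst (fun _ _ => EH.adj_of_not_isShortcut) hc
  · rw [getLast?_collapse hfst, ← hclosed]
    rfl
  · rw [pathWeight_collapse hfst]
    exact (pathWeight_eq_of_potential (R := EH E w h S)
      (φ := fun a => layerPotential h M a.2) (fun _ _ => wH_eq_add_layerPotential M)
      hc hclosed).symm

/-- Every cycle (closed walk) of the layered graph `H` corresponds to a closed
walk of `G` of the same total weight; hence a negative cycle in `H` yields a
negative cycle (closed walk) in `G`. -/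
theorem layered_cycle_correspondence {V : Type*}
    (E : V → V → Prop) (w : V → V → ℝ) (h : ℕ) (hh : 1 ≤ h)
    (M : ℝ) (hM : ∀ u v, E u v → |w u v| < M) (S : Set V) :
    ∀ c : List (V × ℕ), 2 ≤ c.length → List.Chain' (EH E w h S) c →
      c.head? = c.getLast? →
      ∃ g : List V, 2 ≤ g.length ∧ List.Chain' E g ∧ g.head? = g.getLast? ∧
        pathWeight w g = pathWeight (wH w h M) c :=
  layered_cycle_correspondence_general E w h M S
end

section
/- Let G be a weighted directed graph with no negative cycle and let φ(v) = d(V,v) be Johnson's potentials (so w_φ ≥ 0). Build H from two copies G₁ (original weights w) and G₂ (weights w_φ), with edges v₁ → v₂ of weight φ_max − φ(v) and v₂ → v₁ of weight φ(v) − φ_max for each v, where φ_max = max_v φ(v). Then for all s,t: (a) every s₁ → t₁ path in H using at most one negative edge has weight at least d_G(s,t); (b) for every s–t path P in G there is an s₁ → t₁ path in H of weight w(P) with at most one negative edge. Hence d_H^1(s₁,t₁) = d_G(s,t). -/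
open Sum

/-- Edges of the two-copy graph `H`: `inl` is the copy `G₁` with original
weights, `inr` is the copy `G₂` with Johnson-reweighted weights, and each
vertex `v` has crossing edges `v₁ → v₂` and `v₂ → v₁`. -/
def E2 {V : Type*} (E : V → V → Prop) : V ⊕ V → V ⊕ V → Prop
  | inl u, inl v => E u v
  | inr u, inr v => E u v
  | inl u, inr v => u = v
  | inr u, inl v => u = v

/-- Weights of the two-copy graph `H`: `G₁` keeps `w`, `G₂` carries
`w_φ(u,v) = w u v + φ u − φ v`, and the crossing edges `v₁ → v₂`, `v₂ → v₁`
have weights `φmax − φ v` and `φ v − φmax`. -/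
noncomputable def w2 {V : Type*} (w : V → V → ℝ) (φ : V → ℝ) (φmax : ℝ) :
    V ⊕ V → V ⊕ V → ℝ
  | inl u, inl v => w u v
  | inr u, inr v => w u v + φ u - φ v
  | inl u, inr _ => φmax - φ u
  | inr u, inl _ => φ u - φmax

/-!
Part (a) holds for every `s₁ → t₁` path of `H`, whatever its negative edges: `d · t` on `G₁` and
`d · t + φ − φmax` on `G₂` form a feasible potential for `H`, and telescoping it along the path
bounds the weight below by `d s t − d t t`. For part (b), run `P` inside `G₂`, entering at `s` and
leaving at `t`: the reweighting telescopes to `w(P) + φ s − φ t`, the two crossing edges add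
`φmax − φ s` and `φ t − φmax`, and only the last crossing edge can be negative.
-/

section Walks

variable {W : Type*} (w : W → W → ℝ)

theorem pathWeight_cons_cons (a b : W) (l : List W) :
    pathWeight w (a :: b :: l) = w a b + pathWeight w (b :: l) := rfl

theorem pathWeight_append_singleton {l : List W} {a : W} (ha : l.getLast? = some a) (b : W) :
    pathWeight w (l ++ [b]) = pathWeight w l + w a b := by
  induction l with
  | nil => simp at ha
  | cons x l ih =>
    cases l with
    | nil =>
      obtain rfl : x = a := by simpa using ha
      simp [pathWeight]
    | cons y l =>
      rw [List.getLast?_cons_cons] at ha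
      rw [List.cons_append, List.cons_append, pathWeight_cons_cons, ← List.cons_append, ih ha,
        pathWeight_cons_cons]
      ring

theorem pathWeight_map {U : Type*} (f : U → W) (p : List U) :
    pathWeight w (p.map f) = pathWeight (fun u v => w (f u) (f v)) p := by
  induction p with
  | nil => rfl
  | cons x p ih =>
    cases p with
    | nil => rfl
    | cons y p => simp only [List.map_cons, pathWeight_cons_cons] at ih ⊢; rw [ih]

theorem getLast?_cons_map {U : Type*} (f : U → W) (a : W) {p : List U} {t : U}
    (ht : p.getLast? = some t) : (a :: p.map f).getLast? = some (f t) := by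
  rw [List.getLast?_cons, List.getLast?_map, ht]
  rfl

theorem le_pathWeight_add_of_isChain {R : W → W → Prop} (ψ : W → ℝ)
    (hψ : ∀ a b, R a b → ψ a ≤ w a b + ψ b) {p : List W} (hp : p.IsChain R) {a b : W}
    (ha : p.head? = some a) (hb : p.getLast? = some b) :
    ψ a ≤ pathWeight w p + ψ b := by
  induction hp generalizing a with
  | nil => simp at ha
  | singleton x =>
    obtain rfl : x = a := by simpa using ha
    obtain rfl : x = b := by simpa using hb
    simp [pathWeight]
  | cons_cons hr _ ih =>
    obtain rfl := Option.some_injective _ ha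
    rw [List.getLast?_cons_cons] at hb
    have := ih rfl hb
    rw [pathWeight_cons_cons]
    linarith [hψ _ _ hr]

theorem pathWeight_reweight (φ : W → ℝ) {p : List W} {a b : W}
    (ha : p.head? = some a) (hb : p.getLast? = some b) :
    pathWeight (fun u v => w u v + φ u - φ v) p = pathWeight w p + φ a - φ b := by
  induction p generalizing a with
  | nil => simp at ha
  | cons x p ih =>
    obtain rfl := Option.some_injective _ ha
    cases p with
    | nil =>
      obtain rfl : x = b := by simpa using hb
      simp [pathWeight]
    | cons y p =>
      rw [List.getLast?_cons_cons] at hb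
      rw [pathWeight_cons_cons, pathWeight_cons_cons, ih rfl hb]
      ring

theorem negCount_cons_cons (a b : W) (l : List W) :
    negCount w (a :: b :: l) = negCount w (b :: l) + if w a b < 0 then 1 else 0 := by
  simp [negCount, List.countP_cons]

theorem negCount_eq_zero_of_isChain {p : List W} (hp : p.IsChain (fun a b => 0 ≤ w a b)) :
    negCount w p = 0 := by
  induction hp with
  | nil => rfl
  | singleton => rfl
  | cons_cons hr _ ih => rw [negCount_cons_cons, ih, if_neg hr.not_gt]

theorem negCount_append_singleton_le (l : List W) (b : W) :
    negCount w (l ++ [b]) ≤ negCount w l + 1 := by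
  induction l with
  | nil => simp [negCount]
  | cons x l ih =>
    cases l with
    | nil =>
      rw [List.cons_append, List.nil_append, negCount_cons_cons]
      split <;> simp [negCount]
    | cons y l =>
      rw [List.cons_append, List.cons_append, negCount_cons_cons, ← List.cons_append,
        negCount_cons_cons]
      omega

end Walks

section TwoCopy

variable {V : Type*} {E : V → V → Prop} {w : V → V → ℝ} {φ : V → ℝ} {φmax : ℝ}

theorem le_w2_add_of_E2 {d : V → V → ℝ} (hdtri : ∀ u v t : V, E u v → d u t ≤ w u v + d v t)
    (t : V) {a b : V ⊕ V} (hab : E2 E a b) :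
    a.elim (d · t) (fun v => d v t + φ v - φmax) ≤
      w2 w φ φmax a b + b.elim (d · t) (fun v => d v t + φ v - φmax) := by
  rcases a with u | u <;> rcases b with v | v
  · exact hdtri u v t hab
  · obtain rfl : u = v := hab
    simp only [w2, Sum.elim_inl, Sum.elim_inr]
    linarith
  · obtain rfl : u = v := hab
    simp only [w2, Sum.elim_inl, Sum.elim_inr]
    linarith
  · simp only [w2, Sum.elim_inr]
    linarith [hdtri u v t hab]

theorem le_pathWeight_w2 {d : V → V → ℝ} (hrefl : ∀ v, d v v = 0)
    (hdtri : ∀ u v t : V, E u v → d u t ≤ w u v + d v t) {s t : V} {p : List (V ⊕ V)}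
    (hp : p.IsChain (E2 E)) (hs : p.head? = some (inl s)) (ht : p.getLast? = some (inl t)) :
    d s t ≤ pathWeight (w2 w φ φmax) p := by
  simpa [hrefl] using le_pathWeight_add_of_isChain (w2 w φ φmax)
    (Sum.elim (d · t) fun v => d v t + φ v - φmax) (fun _ _ => le_w2_add_of_E2 hdtri t) hp hs ht

def twoCopyLift (s t : V) (p : List V) : List (V ⊕ V) :=
  (inl s :: p.map inr) ++ [inl t]

theorem isChain_twoCopyLift {s t : V} {p : List V} (hp : p.IsChain E)
    (hs : p.head? = some s) (ht : p.getLast? = some t) :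
    (twoCopyLift s t p).IsChain (E2 E) := by
  refine ((List.isChain_map inr).2 hp |>.cons ?_).append (.singleton _) ?_
  · simp only [List.head?_map, hs, Option.map_some, Option.mem_def, Option.some_inj]
    rintro _ rfl
    rfl
  · simp only [getLast?_cons_map inr _ ht, Option.mem_def, Option.some_inj, List.head?_cons]
    rintro _ rfl _ rfl
    rfl

theorem negCount_twoCopyLift_le_one (hvalid : ∀ u v, E u v → 0 ≤ w u v + φ u - φ v)
    (hmax : ∀ v, φ v ≤ φmax) {s t : V} {p : List V} (hp : p.IsChain E)
    (hs : p.head? = some s) : negCount (w2 w φ φmax) (twoCopyLift s t p) ≤ 1 := by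
  have hG₂ : (p.map inr).IsChain fun a b => 0 ≤ w2 w φ φmax a b :=
    (List.isChain_map inr).2 (hp.imp hvalid)
  have hcross : (inl s :: p.map inr).IsChain fun a b => 0 ≤ w2 w φ φmax a b := by
    refine hG₂.cons ?_
    simp only [List.head?_map, hs, Option.map_some, Option.mem_def, Option.some_inj]
    rintro _ rfl
    exact sub_nonneg.2 (hmax s)
  have := negCount_append_singleton_le (w2 w φ φmax) (inl s :: p.map inr) (inl t)
  rwa [negCount_eq_zero_of_isChain _ hcross] at this

theorem pathWeight_twoCopyLift {s t : V} {p : List V} (hs : p.head? = some s)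
    (ht : p.getLast? = some t) :
    pathWeight (w2 w φ φmax) (twoCopyLift s t p) = pathWeight w p := by
  obtain ⟨p, rfl⟩ : ∃ p', p = s :: p' := by
    cases p with
    | nil => simp at hs
    | cons x p => exact ⟨p, by simpa using hs⟩
  have hG₂ : pathWeight (w2 w φ φmax) ((s :: p).map inr) = pathWeight w (s :: p) + φ s - φ t := by
    rw [pathWeight_map]
    exact pathWeight_reweight w φ hs ht
  rw [twoCopyLift, pathWeight_append_singleton _ (getLast?_cons_map inr _ ht), List.map_cons,
    pathWeight_cons_cons, ← List.map_cons, hG₂]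
  simp only [w2]
  ring

end TwoCopy

theorem two_copy_hop_reducer_general {V : Type*}
    (E : V → V → Prop) (w : V → V → ℝ) (φ : V → ℝ) (φmax : ℝ)
    (hvalid : ∀ u v, E u v → 0 ≤ w u v + φ u - φ v)
    (hmax : ∀ v, φ v ≤ φmax)
    (d : V → V → ℝ)
    (hrefl : ∀ v, d v v = 0)
    (hdtri : ∀ u v t : V, E u v → d u t ≤ w u v + d v t) :
    ∀ s t : V,
      (∀ p : List (V ⊕ V), List.Chain' (E2 E) p →
        p.head? = some (inl s) → p.getLast? = some (inl t) →
        negCount (w2 w φ φmax) p ≤ 1 →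
        d s t ≤ pathWeight (w2 w φ φmax) p) ∧
      (∀ p : List V, List.Chain' E p →
        p.head? = some s → p.getLast? = some t →
        ∃ q : List (V ⊕ V), List.Chain' (E2 E) q ∧
          q.head? = some (inl s) ∧ q.getLast? = some (inl t) ∧
          negCount (w2 w φ φmax) q ≤ 1 ∧
          pathWeight (w2 w φ φmax) q = pathWeight w p) := by
  intro s t
  refine ⟨fun p hp hs ht _ => le_pathWeight_w2 hrefl hdtri hp hs ht, fun p hp hs ht => ?_⟩
  exact ⟨twoCopyLift s t p, isChain_twoCopyLift hp hs ht, rfl, List.getLast?_concat,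
    negCount_twoCopyLift_le_one hvalid hmax hp hs, pathWeight_twoCopyLift hs ht⟩

/-- The naive hop reducer: with `φ` Johnson's potentials (valid reweighting)
and `d` the shortest-path distance of `G`, (a) every `s₁ → t₁` path in `H`
with at most one negative edge has weight at least `d s t`, and (b) every
`s → t` path of `G` induces an `s₁ → t₁` path in `H` of the same weight with
at most one negative edge.  Hence `d_H^1(s₁,t₁) = d_G(s,t)`. -/
theorem two_copy_hop_reducer {V : Type*}
    (E : V → V → Prop) (w : V → V → ℝ) (φ : V → ℝ) (φmax : ℝ)
    (hvalid : ∀ u v, E u v → 0 ≤ w u v + φ u - φ v)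
    (hmax : ∀ v, φ v ≤ φmax) (hattain : ∃ v, φmax = φ v)
    (d : V → V → ℝ)
    (hrefl : ∀ v, d v v = 0)
    (hdtri : ∀ u v t : V, E u v → d u t ≤ w u v + d v t) :
    ∀ s t : V,
      (∀ p : List (V ⊕ V), List.Chain' (E2 E) p →
        p.head? = some (inl s) → p.getLast? = some (inl t) →
        negCount (w2 w φ φmax) p ≤ 1 →
        d s t ≤ pathWeight (w2 w φ φmax) p) ∧
      (∀ p : List V, List.Chain' E p →
        p.head? = some s → p.getLast? = some t →
        ∃ q : List (V ⊕ V), List.Chain' (E2 E) q ∧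
          q.head? = some (inl s) ∧ q.getLast? = some (inl t) ∧
          negCount (w2 w φ φmax) q ≤ 1 ∧
          pathWeight (w2 w φ φmax) q = pathWeight w p) :=
  two_copy_hop_reducer_general E w φ φmax hvalid hmax d hrefl hdtri
end

section
/- Define sequences by m₀ = m, k₀ = k, and for d ≥ 0: m_{d+1} ≤ C·m_d·k_d^{1/3} and k_{d+1} ≤ C·k_d^{2/3}·log m' (where m' ≥ m_d). Then for all d ≤ log log m: m_d ≤ m·k^{1−(2/3)^d}·(3C log m)^{3d} and k_d ≤ k^{(2/3)^d}·(3C log m)³. -/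
/-- Growth of the recursion parameters: if `m₀ = m`, `k₀ = k`, and
`m_{d+1} ≤ C·m_d·k_d^{1/3}`, `k_{d+1} ≤ C·k_d^{2/3}·(3 log m)` (using that
`m_d ≤ m³` so `log m_d ≤ 3 log m`), then for all `d ≤ log log m`,
`m_d ≤ m·k^{1−(2/3)^d}·(3C log m)^{3d}` and
`k_d ≤ k^{(2/3)^d}·(3C log m)³`.  Here `L = log₂ m`. -/
theorem recursion_parameter_bounds
    (C m k : ℝ) (hC : 1 ≤ C) (hk : 1 ≤ k) (hkm : k ≤ m)
    (L : ℝ) (hL : L = Real.logb 2 m) (hL2 : 2 ≤ L)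
    (ms ks : ℕ → ℝ)
    (hms0 : ms 0 = m) (hks0 : ks 0 = k)
    (hnn : ∀ d, 0 ≤ ms d ∧ 0 ≤ ks d)
    (hmrec : ∀ d, ms (d + 1) ≤ C * ms d * ks d ^ ((1 : ℝ) / 3))
    (hkrec : ∀ d, ks (d + 1) ≤ C * ks d ^ ((2 : ℝ) / 3) * (3 * L)) :
    ∀ d : ℕ, (d : ℝ) ≤ Real.logb 2 L →
      ms d ≤ m * k ^ (1 - ((2 : ℝ) / 3) ^ d) * (3 * C * L) ^ (3 * d) ∧
      ks d ≤ k ^ (((2 : ℝ) / 3) ^ d) * (3 * C * L) ^ 3 := by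
  have hk0 : (0:ℝ) < k := by linarith
  have hm0 : (0:ℝ) < m := by linarith
  have hA1 : (1:ℝ) ≤ 3 * C * L := by nlinarith
  have hA0 : (0:ℝ) ≤ 3 * C * L := by linarith
  have key : ∀ d : ℕ,
      ms d ≤ m * k ^ (1 - ((2 : ℝ) / 3) ^ d) * (3 * C * L) ^ (3 * d) ∧
      ks d ≤ k ^ (((2 : ℝ) / 3) ^ d) * (3 * C * L) ^ 3 := by
    intro d
    induction d with
    | zero =>
      constructor
      · simp [hms0]
      · simp only [pow_zero, Real.rpow_one, hks0, Nat.mul_zero]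
        nlinarith [pow_le_pow_left₀ (by norm_num : (0:ℝ) ≤ 1) hA1 3]
    | succ d ih =>
      obtain ⟨ihm, ihk⟩ := ih
      set A := 3 * C * L with hAdef
      set e := ((2:ℝ)/3) ^ d with hedef
      have he0 : 0 ≤ e := by positivity
      have hb0 : 0 ≤ k ^ e * A ^ 3 := by positivity
      -- bound ks d ^ (2/3)
      have hEq2 : (k ^ e * A ^ 3) ^ ((2:ℝ)/3) = k ^ (e * (2/3)) * A ^ 2 := by
        rw [Real.mul_rpow (Real.rpow_nonneg hk0.le _) (pow_nonneg hA0 _),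
          ← Real.rpow_mul hk0.le, ← Real.rpow_natCast A 3, ← Real.rpow_mul hA0]
        norm_num
      have hEq1 : (k ^ e * A ^ 3) ^ ((1:ℝ)/3) = k ^ (e * (1/3)) * A := by
        rw [Real.mul_rpow (Real.rpow_nonneg hk0.le _) (pow_nonneg hA0 _),
          ← Real.rpow_mul hk0.le, ← Real.rpow_natCast A 3, ← Real.rpow_mul hA0]
        norm_num
      have hks23 : ks d ^ ((2:ℝ)/3) ≤ k ^ (e * (2/3)) * A ^ 2 := by
        rw [← hEq2]
        exact Real.rpow_le_rpow (hnn d).2 ihk (by norm_num)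
      have hks13 : ks d ^ ((1:ℝ)/3) ≤ k ^ (e * (1/3)) * A := by
        rw [← hEq1]
        exact Real.rpow_le_rpow (hnn d).2 ihk (by norm_num)
      constructor
      · -- m bound
        have h1 : ms (d+1) ≤ C * (m * k ^ (1 - e) * A ^ (3*d)) * (k ^ (e * (1/3)) * A) := by
          refine le_trans (hmrec d) ?_
          apply mul_le_mul
          · exact mul_le_mul_of_nonneg_left ihm (by linarith)
          · exact hks13
          · exact Real.rpow_nonneg (hnn d).2 _
          · positivity
        refine h1.trans ?_
        have hexp : 1 - ((2:ℝ)/3) ^ (d+1) = (1 - e) + e * (1/3) := by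
          rw [pow_succ, ← hedef]; ring
        rw [hexp, Real.rpow_add hk0, show 3*(d+1) = 3*d + 3 by ring, pow_add]
        have hCA : C ≤ A ^ 2 := by
          have : (6:ℝ) * C ≤ A := by rw [hAdef]; nlinarith
          nlinarith
        have hp : (0:ℝ) ≤ m * k ^ (1 - e) * A ^ (3*d) * (k ^ (e * (1/3)) * A) := by
          positivity
        calc C * (m * k ^ (1 - e) * A ^ (3*d)) * (k ^ (e * (1/3)) * A)
            ≤ A ^ 2 * (m * k ^ (1 - e) * A ^ (3*d)) * (k ^ (e * (1/3)) * A) := by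
              have := mul_le_mul_of_nonneg_right hCA hp
              nlinarith [this]
          _ = m * (k ^ (1 - e) * k ^ (e * (1/3))) * (A ^ (3*d) * A ^ 3) := by ring
      · -- k bound
        have h1 : ks (d+1) ≤ C * (k ^ (e * (2/3)) * A ^ 2) * (3 * L) := by
          refine le_trans (hkrec d) ?_
          apply mul_le_mul_of_nonneg_right (mul_le_mul_of_nonneg_left hks23 (by linarith))
          linarith
        refine h1.trans ?_
        have hexp : ((2:ℝ)/3) ^ (d+1) = e * (2/3) := by rw [pow_succ, ← hedef]
        rw [hexp]
        have heq : C * (k ^ (e * (2/3)) * A ^ 2) * (3 * L) = k ^ (e * (2/3)) * A ^ 3 := by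
          rw [hAdef]; ring
        exact heq.le
  intro d _
  exact key d
end
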